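/- arXiv:2111.14608 — 6 statements merged into one kernel-verified Lean document; each statement's English description precedes it below -/
import Mathlib

section
/- In the GEW₁ model (uniform priors on all parameters), the full conditional posterior density of θ₁ is log-concave on ℝ. Precisely: for any fixed θ₂, θ₃, θ₄ ∈ ℝ and β > 0, the function ℓ : ℝ → ℝ given by ℓ(t) = −t·(Σ_{i=1}^k r_i) − Σ_{i=1}^k (n_i − r_i) T_i exp(−t − θ₂/T_i − θ₃V_i − θ₄V_i/T_i) τ_i^β − Σ_{i=1}^k Σ_{j=1}^{r_i} T_i exp(−t − θ₂/T_i − θ₃V_i − θ₄V_i/T_i) x_{ij}^β is concave on ℝ (equivalently, its second derivative is ≤ 0 everywhere). -/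
/-! θ₁ enters ℓ only through the common factor `exp (-θ₁)`, so
`ℓ(t) = -t R - S e^{-t}` with `R = Σ rᵢ` and a constant `S ≥ 0`: a linear function minus a
nonnegative multiple of the convex function `e^{-t}`. -/

open Real Finset

lemma convexOn_exp_neg : ConvexOn ℝ Set.univ fun t : ℝ => exp (-t) := by
  simpa [Function.comp_def] using convexOn_exp.comp_affineMap (-AffineMap.id ℝ ℝ)

lemma concaveOn_neg_mul_sub_mul_exp_neg (R : ℝ) {S : ℝ} (hS : 0 ≤ S) :
    ConcaveOn ℝ Set.univ fun t : ℝ => -t * R - S * exp (-t) := by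
  have hlin : ConcaveOn ℝ Set.univ fun t : ℝ => -t * R :=
    (LinearMap.mulRight ℝ (-R)).concaveOn convex_univ |>.congr fun t _ => by simp
  exact hlin.sub (convexOn_exp_neg.smul hS)

theorem gew1_theta1_logconcave_general
    (k : ℕ) (T V τ : Fin k → ℝ) (n r : Fin k → ℕ)
    (x : (i : Fin k) → Fin (r i) → ℝ)
    (hT : ∀ i, 0 < T i) (hrn : ∀ i, r i ≤ n i)
    (hτ : ∀ i, 0 < τ i) (hx : ∀ i j, 0 < x i j)
    (θ₂ θ₃ θ₄ β : ℝ) :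
    ConcaveOn ℝ Set.univ (fun t : ℝ =>
      -t * (∑ i, (r i : ℝ))
      - ∑ i, ((n i : ℝ) - r i) * T i * Real.exp (-t - θ₂ / T i - θ₃ * V i - θ₄ * V i / T i) * τ i ^ β
      - ∑ i, ∑ j, T i * Real.exp (-t - θ₂ / T i - θ₃ * V i - θ₄ * V i / T i) * x i j ^ β) := by
  set E : Fin k → ℝ := fun i => exp (-θ₂ / T i - θ₃ * V i - θ₄ * V i / T i)
  have hexp (t : ℝ) (i : Fin k) :
      exp (-t - θ₂ / T i - θ₃ * V i - θ₄ * V i / T i) = exp (-t) * E i := by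
    rw [← exp_add]; congr 1; ring
  set S := ∑ i, ((n i : ℝ) - r i) * T i * E i * τ i ^ β + ∑ i, ∑ j, T i * E i * x i j ^ β
  have hS : 0 ≤ S := by
    have hnr (i : Fin k) : (0 : ℝ) ≤ n i - r i := sub_nonneg.2 (by exact_mod_cast hrn i)
    have hE (i : Fin k) : 0 ≤ E i := (exp_pos _).le
    refine add_nonneg (sum_nonneg fun i _ => ?_) (sum_nonneg fun i _ => sum_nonneg fun j _ => ?_)
    · exact mul_nonneg (mul_nonneg (mul_nonneg (hnr i) (hT i).le) (hE i)) (rpow_nonneg (hτ i).le β)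
    · exact mul_nonneg (mul_nonneg (hT i).le (hE i)) (rpow_nonneg (hx i j).le β)
  have hsum (t : ℝ) :
      ∑ i, ((n i : ℝ) - r i) * T i * exp (-t - θ₂ / T i - θ₃ * V i - θ₄ * V i / T i) * τ i ^ β
        + ∑ i, ∑ j, T i * exp (-t - θ₂ / T i - θ₃ * V i - θ₄ * V i / T i) * x i j ^ β
        = S * exp (-t) := by
    simp only [hexp, S, add_mul, sum_mul]
    congr 1 <;> refine sum_congr rfl fun i _ => ?_
    · ring
    · exact sum_congr rfl fun j _ => by ring
  refine (concaveOn_neg_mul_sub_mul_exp_neg (∑ i, (r i : ℝ)) hS).congr fun t _ => ?_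
  rw [sub_sub, hsum]

theorem gew1_theta1_logconcave
    (k : ℕ) (T V τ : Fin k → ℝ) (n r : Fin k → ℕ)
    (x : (i : Fin k) → Fin (r i) → ℝ)
    (hT : ∀ i, 0 < T i) (hrn : ∀ i, r i ≤ n i)
    (hτ : ∀ i, 0 < τ i) (hx : ∀ i j, 0 < x i j)
    (θ₂ θ₃ θ₄ β : ℝ) (hβ : 0 < β) :
    ConcaveOn ℝ Set.univ (fun t : ℝ =>
      -t * (∑ i, (r i : ℝ))
      - ∑ i, ((n i : ℝ) - r i) * T i * Real.exp (-t - θ₂ / T i - θ₃ * V i - θ₄ * V i / T i) * τ i ^ β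
      - ∑ i, ∑ j, T i * Real.exp (-t - θ₂ / T i - θ₃ * V i - θ₄ * V i / T i) * x i j ^ β) :=
  gew1_theta1_logconcave_general k T V τ n r x hT hrn hτ hx θ₂ θ₃ θ₄ β
end

section
/- In the GEW₁ model (uniform priors on all parameters), the full conditional posterior density of θ₃ is log-concave on ℝ. Precisely: for any fixed θ₁, θ₂, θ₄ ∈ ℝ and β > 0, the function ℓ : ℝ → ℝ given by ℓ(t) = −t·(Σ_{i=1}^k r_iV_i) − Σ_{i=1}^k (n_i − r_i) T_i exp(−θ₁ − θ₂/T_i − tV_i − θ₄V_i/T_i) τ_i^β − Σ_{i=1}^k Σ_{j=1}^{r_i} T_i exp(−θ₁ − θ₂/T_i − tV_i − θ₄V_i/T_i) x_{ij}^β is concave on ℝ. -/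
/-! For fixed `θ₁, θ₂, θ₄, β`, every exponential term is a nonnegative multiple of `exp` of an
affine function of `t`, hence convex; the log-density is a linear function minus finite sums of
such terms, hence concave. -/

open Real Finset

theorem ConvexOn.fun_sum {𝕜 E β ι : Type*} [Semiring 𝕜] [PartialOrder 𝕜] [AddCommMonoid E]
    [AddCommMonoid β] [PartialOrder β] [IsOrderedAddMonoid β] [SMul 𝕜 E] [Module 𝕜 β]
    {s : Set E} (hs : Convex 𝕜 s) {t : Finset ι} {f : ι → E → β}
    (hf : ∀ i ∈ t, ConvexOn 𝕜 s (f i)) : ConvexOn 𝕜 s fun x => ∑ i ∈ t, f i x := by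
  classical
  induction t using Finset.induction_on with
  | empty => simpa using convexOn_const (0 : β) hs
  | insert j t hj ih =>
    simp only [Finset.sum_insert hj]
    exact (hf j (mem_insert_self j t)).add (ih fun i hi => hf i (mem_insert_of_mem hi))

theorem convexOn_const_mul_exp_affine {c : ℝ} (hc : 0 ≤ c) (a b : ℝ) :
    ConvexOn ℝ Set.univ fun t => c * exp (a + b * t) :=
  (convexOn_exp.comp_affineMap (b • AffineMap.id ℝ ℝ + AffineMap.const ℝ ℝ a)).smul hc |>.congr
    fun t _ => by simp [add_comm]

theorem concaveOn_neg_mul_const (S : ℝ) : ConcaveOn ℝ Set.univ fun t : ℝ => -t * S :=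
  (LinearMap.smulRight LinearMap.id (-S) : ℝ →ₗ[ℝ] ℝ).concaveOn convex_univ |>.congr
    fun t _ => by simp

theorem gew1_theta3_logconcave_general
    (k : ℕ) (T V τ : Fin k → ℝ) (n r : Fin k → ℕ)
    (x : (i : Fin k) → Fin (r i) → ℝ)
    (hT : ∀ i, 0 < T i) (hrn : ∀ i, r i ≤ n i)
    (hτ : ∀ i, 0 < τ i) (hx : ∀ i j, 0 < x i j)
    (θ₁ θ₂ θ₄ β : ℝ) :
    ConcaveOn ℝ Set.univ (fun t : ℝ =>
      -t * (∑ i, (r i : ℝ) * V i)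
      - ∑ i, ((n i : ℝ) - r i) * T i * Real.exp (-θ₁ - θ₂ / T i - t * V i - θ₄ * V i / T i) * τ i ^ β
      - ∑ i, ∑ j, T i * Real.exp (-θ₁ - θ₂ / T i - t * V i - θ₄ * V i / T i) * x i j ^ β) := by
  have hexp : ∀ i c, 0 ≤ c → ConvexOn ℝ Set.univ fun t =>
      c * exp (-θ₁ - θ₂ / T i - t * V i - θ₄ * V i / T i) := fun i c hc =>
    (convexOn_const_mul_exp_affine hc (-θ₁ - θ₂ / T i - θ₄ * V i / T i) (-V i)).congr
      fun t _ => by ring_nf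
  have hcensored : ConvexOn ℝ Set.univ fun t => ∑ i, ((n i : ℝ) - r i) * T i *
      exp (-θ₁ - θ₂ / T i - t * V i - θ₄ * V i / T i) * τ i ^ β := by
    refine ConvexOn.fun_sum convex_univ fun i _ => ?_
    have hnr : (0 : ℝ) ≤ n i - r i := sub_nonneg.2 (by exact_mod_cast hrn i)
    have hc : 0 ≤ ((n i : ℝ) - r i) * T i * τ i ^ β :=
      mul_nonneg (mul_nonneg hnr (hT i).le) (rpow_nonneg (hτ i).le β)
    exact (hexp i _ hc).congr fun t _ => by ring
  have hfailures : ConvexOn ℝ Set.univ fun t => ∑ i, ∑ j, T i *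
      exp (-θ₁ - θ₂ / T i - t * V i - θ₄ * V i / T i) * x i j ^ β := by
    refine ConvexOn.fun_sum convex_univ fun i _ => ConvexOn.fun_sum convex_univ fun j _ => ?_
    have hc : 0 ≤ T i * x i j ^ β := mul_nonneg (hT i).le (rpow_nonneg (hx i j).le β)
    exact (hexp i _ hc).congr fun t _ => by ring
  exact ((concaveOn_neg_mul_const _).sub hcensored).sub hfailures

theorem gew1_theta3_logconcave
    (k : ℕ) (T V τ : Fin k → ℝ) (n r : Fin k → ℕ)
    (x : (i : Fin k) → Fin (r i) → ℝ)
    (hT : ∀ i, 0 < T i) (hrn : ∀ i, r i ≤ n i)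
    (hτ : ∀ i, 0 < τ i) (hx : ∀ i j, 0 < x i j)
    (θ₁ θ₂ θ₄ β : ℝ) (hβ : 0 < β) :
    ConcaveOn ℝ Set.univ (fun t : ℝ =>
      -t * (∑ i, (r i : ℝ) * V i)
      - ∑ i, ((n i : ℝ) - r i) * T i * Real.exp (-θ₁ - θ₂ / T i - t * V i - θ₄ * V i / T i) * τ i ^ β
      - ∑ i, ∑ j, T i * Real.exp (-θ₁ - θ₂ / T i - t * V i - θ₄ * V i / T i) * x i j ^ β) :=
  gew1_theta3_logconcave_general k T V τ n r x hT hrn hτ hx θ₁ θ₂ θ₄ β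
end

section
/- In the GEW₂ model (gamma priors on all parameters), the full conditional posterior density of θ₁ is log-concave on (0, ∞), provided the gamma shape hyperparameter c₁₀ satisfies c₁₀ ≥ 1. Precisely: for any fixed θ₂, θ₃, θ₄ > 0, β > 0, c₁₀ ≥ 1 and c₁₁ > 0, the function ℓ : (0,∞) → ℝ given by ℓ(t) = (c₁₀ − 1)·ln t − c₁₁·t − t·(Σ_{i=1}^k r_i) − Σ_{i=1}^k (n_i − r_i) T_i exp(−t − θ₂/T_i − θ₃V_i − θ₄V_i/T_i) τ_i^β − Σ_{i=1}^k Σ_{j=1}^{r_i} T_i exp(−t − θ₂/T_i − θ₃V_i − θ₄V_i/T_i) x_{ij}^β is concave on (0, ∞). -/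
open Real Finset

lemma concaveOn_mul_log_sub_mul_sub_mul_exp_neg {a b c : ℝ} (ha : 0 ≤ a) (hb : 0 ≤ b)
    (hc : 0 ≤ c) : ConcaveOn ℝ (Set.Ioi 0) fun t => a * log t - b * t - c * exp (-t) :=
  ((strictConcaveOn_log_Ioi.concaveOn.smul ha).sub ((convexOn_id (convex_Ioi 0)).smul hb)).sub
    ((convexOn_exp_neg.subset (Set.subset_univ _) (convex_Ioi 0)).smul hc)

theorem gew2_theta1_logconcave_general
    (k : ℕ) (T V τ : Fin k → ℝ) (n r : Fin k → ℕ)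
    (x : (i : Fin k) → Fin (r i) → ℝ)
    (hT : ∀ i, 0 < T i) (hrn : ∀ i, r i ≤ n i)
    (hτ : ∀ i, 0 < τ i) (hx : ∀ i j, 0 < x i j)
    (θ₂ θ₃ θ₄ β : ℝ)
    (c₁₀ c₁₁ : ℝ) (hcs : 1 ≤ c₁₀) (hcr : 0 < c₁₁) :
    ConcaveOn ℝ (Set.Ioi (0 : ℝ)) (fun t : ℝ =>
      (c₁₀ - 1) * Real.log t - c₁₁ * t
      - t * (∑ i, (r i : ℝ))
      - ∑ i, ((n i : ℝ) - r i) * T i * Real.exp (-t - θ₂ / T i - θ₃ * V i - θ₄ * V i / T i) * τ i ^ β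
      - ∑ i, ∑ j, T i * Real.exp (-t - θ₂ / T i - θ₃ * V i - θ₄ * V i / T i) * x i j ^ β) := by
  set w : Fin k → ℝ := fun i => exp (-θ₂ / T i - θ₃ * V i - θ₄ * V i / T i)
  have hsplit (t : ℝ) (i : Fin k) :
      exp (-t - θ₂ / T i - θ₃ * V i - θ₄ * V i / T i) = w i * exp (-t) := by
    rw [← exp_add]; ring_nf
  set c := ∑ i, ((n i : ℝ) - r i) * T i * w i * τ i ^ β + ∑ i, ∑ j, T i * w i * x i j ^ β
  have hc : 0 ≤ c := by
    refine add_nonneg (sum_nonneg fun i _ => ?_) (sum_nonneg fun i _ => sum_nonneg fun j _ => ?_)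
    · have : (0 : ℝ) ≤ n i - r i := sub_nonneg.2 (Nat.cast_le.2 (hrn i))
      have := hT i; have := hτ i
      positivity
    · have := hT i; have := hx i j
      positivity
  have hb : 0 ≤ c₁₁ + ∑ i, (r i : ℝ) := by positivity
  have hsum (t : ℝ) :
      ∑ i, ((n i : ℝ) - r i) * T i * exp (-t - θ₂ / T i - θ₃ * V i - θ₄ * V i / T i) * τ i ^ β
        + ∑ i, ∑ j, T i * exp (-t - θ₂ / T i - θ₃ * V i - θ₄ * V i / T i) * x i j ^ β
        = c * exp (-t) := by
    simp only [c, add_mul, sum_mul, hsplit]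
    congr 1 <;> refine sum_congr rfl fun i _ => ?_
    · ring
    · exact sum_congr rfl fun j _ => by ring
  refine (concaveOn_mul_log_sub_mul_sub_mul_exp_neg (sub_nonneg.2 hcs) hb hc).congr fun t _ => ?_
  dsimp only
  rw [← hsum]
  ring

theorem gew2_theta1_logconcave
    (k : ℕ) (T V τ : Fin k → ℝ) (n r : Fin k → ℕ)
    (x : (i : Fin k) → Fin (r i) → ℝ)
    (hT : ∀ i, 0 < T i) (hrn : ∀ i, r i ≤ n i)
    (hτ : ∀ i, 0 < τ i) (hx : ∀ i j, 0 < x i j)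
    (θ₂ θ₃ θ₄ β : ℝ) (hθ : 0 < θ₂ ∧ 0 < θ₃ ∧ 0 < θ₄) (hβ : 0 < β)
    (c₁₀ c₁₁ : ℝ) (hcs : 1 ≤ c₁₀) (hcr : 0 < c₁₁) :
    ConcaveOn ℝ (Set.Ioi (0 : ℝ)) (fun t : ℝ =>
      (c₁₀ - 1) * Real.log t - c₁₁ * t
      - t * (∑ i, (r i : ℝ))
      - ∑ i, ((n i : ℝ) - r i) * T i * Real.exp (-t - θ₂ / T i - θ₃ * V i - θ₄ * V i / T i) * τ i ^ β
      - ∑ i, ∑ j, T i * Real.exp (-t - θ₂ / T i - θ₃ * V i - θ₄ * V i / T i) * x i j ^ β) :=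
  gew2_theta1_logconcave_general k T V τ n r x hT hrn hτ hx θ₂ θ₃ θ₄ β c₁₀ c₁₁ hcs hcr
end

section
/- In the GEW₂ model (gamma priors on all parameters), the full conditional posterior density of θ₂ is log-concave on (0, ∞), provided the gamma shape hyperparameter c₁₂ satisfies c₁₂ ≥ 1. Precisely: for any fixed θ₁, θ₃, θ₄ > 0, β > 0, c₁₂ ≥ 1 and c₁₃ > 0, the function ℓ : (0,∞) → ℝ given by ℓ(t) = (c₁₂ − 1)·ln t − c₁₃·t − t·(Σ_{i=1}^k r_i/T_i) − Σ_{i=1}^k (n_i − r_i) T_i exp(−θ₁ − t/T_i − θ₃V_i − θ₄V_i/T_i) τ_i^β − Σ_{i=1}^k Σ_{j=1}^{r_i} T_i exp(−θ₁ − t/T_i − θ₃V_i − θ₄V_i/T_i) x_{ij}^β is concave on (0, ∞). -/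
/-!
`(c₁₂ - 1) log t` is concave because `c₁₂ ≥ 1`, the two linear terms are affine, and every
remaining term is a nonnegative constant times the exponential of an affine function of `t`,
hence convex. A concave function minus convex ones is concave.
-/

open Real Finset

section
variable {𝕜 E β ι : Type*} [Semiring 𝕜] [PartialOrder 𝕜] [AddCommMonoid E] [AddCommMonoid β]
  [PartialOrder β] [IsOrderedAddMonoid β] [SMul 𝕜 E] [Module 𝕜 β]

theorem convexOn_finset_sum {s : Set E} (hs : Convex 𝕜 s) {t : Finset ι} {f : ι → E → β}
    (hf : ∀ i ∈ t, ConvexOn 𝕜 s (f i)) : ConvexOn 𝕜 s fun x => ∑ i ∈ t, f i x := by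
  classical
  induction t using Finset.induction_on with
  | empty => simpa using convexOn_const 0 hs
  | insert a t hat ih =>
    simp only [Finset.sum_insert hat]
    exact (hf a (mem_insert_self a t)).add (ih fun i hi => hf i (mem_insert_of_mem hi))

end

section
variable {E : Type*} [AddCommMonoid E] [SMul ℝ E] {s : Set E} {f : E → ℝ}

theorem ConvexOn.exp (hf : ConvexOn ℝ s f) : ConvexOn ℝ s fun x => Real.exp (f x) :=
  ⟨hf.1, fun _ hx _ hy _ _ ha hb hab =>
    (exp_le_exp.2 (hf.2 hx hy ha hb hab)).trans
      (convexOn_exp.2 (Set.mem_univ _) (Set.mem_univ _) ha hb hab)⟩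

theorem ConvexOn.const_mul_mul_const (hf : ConvexOn ℝ s f) {a b : ℝ} (ha : 0 ≤ a) (hb : 0 ≤ b) :
    ConvexOn ℝ s fun x => a * f x * b :=
  (hf.smul (mul_nonneg ha hb)).congr fun x _ => by simp only [smul_eq_mul]; ring

end

theorem convexOn_exp_eyring (θ₁ θ₃ θ₄ T V : ℝ) :
    ConvexOn ℝ Set.univ fun t => Real.exp (-θ₁ - t / T - θ₃ * V - θ₄ * V / T) :=
  ConvexOn.exp ⟨convex_univ, fun u _ v _ a b _ _ hab => le_of_eq <| by
    simp only [smul_eq_mul]; linear_combination (θ₁ + θ₃ * V + θ₄ * V / T) * hab⟩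

theorem gew2_theta2_logconcave_general
    (k : ℕ) (T V τ : Fin k → ℝ) (n r : Fin k → ℕ)
    (x : (i : Fin k) → Fin (r i) → ℝ)
    (hT : ∀ i, 0 < T i) (hrn : ∀ i, r i ≤ n i)
    (hτ : ∀ i, 0 < τ i) (hx : ∀ i j, 0 < x i j)
    (θ₁ θ₃ θ₄ β : ℝ)
    (c₁₂ c₁₃ : ℝ) (hcs : 1 ≤ c₁₂) :
    ConcaveOn ℝ (Set.Ioi (0 : ℝ)) (fun t : ℝ =>
      (c₁₂ - 1) * Real.log t - c₁₃ * t
      - t * (∑ i, (r i : ℝ) / T i)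
      - ∑ i, ((n i : ℝ) - r i) * T i * Real.exp (-θ₁ - t / T i - θ₃ * V i - θ₄ * V i / T i) * τ i ^ β
      - ∑ i, ∑ j, T i * Real.exp (-θ₁ - t / T i - θ₃ * V i - θ₄ * V i / T i) * x i j ^ β) := by
  have hs : Convex ℝ (Set.Ioi (0 : ℝ)) := convex_Ioi 0
  have hrate (i : Fin k) : ConvexOn ℝ (Set.Ioi 0)
      fun t => Real.exp (-θ₁ - t / T i - θ₃ * V i - θ₄ * V i / T i) :=
    (convexOn_exp_eyring θ₁ θ₃ θ₄ (T i) (V i)).subset (Set.subset_univ _) hs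
  have hcensored : ConvexOn ℝ (Set.Ioi 0) fun t => ∑ i, ((n i : ℝ) - r i) * T i *
      Real.exp (-θ₁ - t / T i - θ₃ * V i - θ₄ * V i / T i) * τ i ^ β :=
    convexOn_finset_sum hs fun i _ => (hrate i).const_mul_mul_const
      (mul_nonneg (sub_nonneg.2 (Nat.cast_le.2 (hrn i))) (hT i).le) (rpow_pos_of_pos (hτ i) β).le
  have hfailed : ConvexOn ℝ (Set.Ioi 0) fun t => ∑ i, ∑ j, T i *
      Real.exp (-θ₁ - t / T i - θ₃ * V i - θ₄ * V i / T i) * x i j ^ β :=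
    convexOn_finset_sum hs fun i _ => convexOn_finset_sum hs fun j _ =>
      (hrate i).const_mul_mul_const (hT i).le (rpow_pos_of_pos (hx i j) β).le
  have hlog : ConcaveOn ℝ (Set.Ioi 0) fun t => (c₁₂ - 1) * Real.log t :=
    strictConcaveOn_log_Ioi.concaveOn.smul (sub_nonneg.2 hcs)
  exact (((hlog.sub ((LinearMap.mulLeft ℝ c₁₃).convexOn hs)).sub
    ((LinearMap.mulRight ℝ _).convexOn hs)).sub hcensored).sub hfailed

theorem gew2_theta2_logconcave
    (k : ℕ) (T V τ : Fin k → ℝ) (n r : Fin k → ℕ)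
    (x : (i : Fin k) → Fin (r i) → ℝ)
    (hT : ∀ i, 0 < T i) (hrn : ∀ i, r i ≤ n i)
    (hτ : ∀ i, 0 < τ i) (hx : ∀ i j, 0 < x i j)
    (θ₁ θ₃ θ₄ β : ℝ) (hθ : 0 < θ₁ ∧ 0 < θ₃ ∧ 0 < θ₄) (hβ : 0 < β)
    (c₁₂ c₁₃ : ℝ) (hcs : 1 ≤ c₁₂) (hcr : 0 < c₁₃) :
    ConcaveOn ℝ (Set.Ioi (0 : ℝ)) (fun t : ℝ =>
      (c₁₂ - 1) * Real.log t - c₁₃ * t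
      - t * (∑ i, (r i : ℝ) / T i)
      - ∑ i, ((n i : ℝ) - r i) * T i * Real.exp (-θ₁ - t / T i - θ₃ * V i - θ₄ * V i / T i) * τ i ^ β
      - ∑ i, ∑ j, T i * Real.exp (-θ₁ - t / T i - θ₃ * V i - θ₄ * V i / T i) * x i j ^ β) :=
  gew2_theta2_logconcave_general k T V τ n r x hT hrn hτ hx θ₁ θ₃ θ₄ β c₁₂ c₁₃ hcs
end

section
/- In the GEW₂ model (gamma priors on all parameters), the full conditional posterior density of θ₄ is log-concave on (0, ∞), provided the gamma shape hyperparameter c₁₆ satisfies c₁₆ ≥ 1. Precisely: for any fixed θ₁, θ₂, θ₃ > 0, β > 0, c₁₆ ≥ 1 and c₁₇ > 0, the function ℓ : (0,∞) → ℝ given by ℓ(t) = (c₁₆ − 1)·ln t − c₁₇·t − t·(Σ_{i=1}^k r_iV_i/T_i) − Σ_{i=1}^k (n_i − r_i) T_i exp(−θ₁ − θ₂/T_i − θ₃V_i − tV_i/T_i) τ_i^β − Σ_{i=1}^k Σ_{j=1}^{r_i} T_i exp(−θ₁ − θ₂/T_i − θ₃V_i − tV_i/T_i) x_{ij}^β is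 concave on (0, ∞). -/
open Real Finset

/-! The log-prior term `(c₁₆ - 1) log t` is concave because `c₁₆ ≥ 1`, the terms linear in `t` are
concave, and both likelihood sums are nonnegative combinations of exponentials of affine functions
of `t`, hence convex. -/

theorem convexOn_sum {𝕜 E β ι : Type*} [Semiring 𝕜] [PartialOrder 𝕜] [AddCommMonoid E]
    [AddCommMonoid β] [PartialOrder β] [IsOrderedAddMonoid β] [SMul 𝕜 E] [Module 𝕜 β]
    {s : Set E} (hs : Convex 𝕜 s) (t : Finset ι) {f : ι → E → β}
    (hf : ∀ i ∈ t, ConvexOn 𝕜 s (f i)) : ConvexOn 𝕜 s fun x => ∑ i ∈ t, f i x := by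
  classical
  induction t using Finset.induction_on with
  | empty => simpa using convexOn_const 0 hs
  | insert i t hi ih =>
    simp only [Finset.sum_insert hi]
    exact (hf i (mem_insert_self i t)).add (ih fun j hj => hf j (mem_insert_of_mem hj))

theorem convexOn_exp_sub_mul {s : Set ℝ} (hs : Convex ℝ s) (p q : ℝ) :
    ConvexOn ℝ s fun t => exp (p - t * q) := by
  refine ((convexOn_exp.comp_affineMap (AffineMap.lineMap p (p - q))).subset
    (Set.subset_univ _) hs).congr fun t _ => ?_
  simp only [Function.comp_apply, AffineMap.lineMap_apply_ring']
  congr 1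
  ring

theorem convexOn_mul_exp_sub_mul_mul {s : Set ℝ} (hs : Convex ℝ s) {c d : ℝ} (hc : 0 ≤ c)
    (hd : 0 ≤ d) (p q : ℝ) : ConvexOn ℝ s fun t => c * exp (p - t * q) * d := by
  refine ((convexOn_exp_sub_mul hs p q).smul (mul_nonneg hc hd)).congr fun t _ => ?_
  simp only [smul_eq_mul]
  ring

theorem gew2_theta4_logconcave_general
    (k : ℕ) (T V τ : Fin k → ℝ) (n r : Fin k → ℕ)
    (x : (i : Fin k) → Fin (r i) → ℝ)
    (hT : ∀ i, 0 < T i) (hrn : ∀ i, r i ≤ n i)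
    (hτ : ∀ i, 0 < τ i) (hx : ∀ i j, 0 < x i j)
    (θ₁ θ₂ θ₃ β : ℝ)
    (c₁₆ c₁₇ : ℝ) (hcs : 1 ≤ c₁₆) :
    ConcaveOn ℝ (Set.Ioi (0 : ℝ)) (fun t : ℝ =>
      (c₁₆ - 1) * Real.log t - c₁₇ * t
      - t * (∑ i, (r i : ℝ) * V i / T i)
      - ∑ i, ((n i : ℝ) - r i) * T i * Real.exp (-θ₁ - θ₂ / T i - θ₃ * V i - t * V i / T i) * τ i ^ β
      - ∑ i, ∑ j, T i * Real.exp (-θ₁ - θ₂ / T i - θ₃ * V i - t * V i / T i) * x i j ^ β) := by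
  simp only [mul_div_assoc]
  have hs : Convex ℝ (Set.Ioi (0 : ℝ)) := convex_Ioi 0
  have hlog : ConcaveOn ℝ (Set.Ioi 0) fun t => (c₁₆ - 1) * log t :=
    strictConcaveOn_log_Ioi.concaveOn.smul (sub_nonneg.2 hcs)
  have hcensored := convexOn_sum hs univ fun i _ =>
    convexOn_mul_exp_sub_mul_mul hs (mul_nonneg (sub_nonneg.2 (Nat.cast_le.2 (hrn i))) (hT i).le)
      (rpow_nonneg (hτ i).le β) (-θ₁ - θ₂ / T i - θ₃ * V i) (V i / T i)
  have hfailed := convexOn_sum hs univ fun i _ => convexOn_sum hs univ fun j _ =>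
    convexOn_mul_exp_sub_mul_mul hs (hT i).le
      (rpow_nonneg (hx i j).le β) (-θ₁ - θ₂ / T i - θ₃ * V i) (V i / T i)
  exact (((hlog.sub ((LinearMap.mulLeft ℝ c₁₇).convexOn hs)).sub
    ((LinearMap.mulRight ℝ (∑ i, (r i : ℝ) * (V i / T i))).convexOn hs)).sub hcensored).sub hfailed

theorem gew2_theta4_logconcave
    (k : ℕ) (T V τ : Fin k → ℝ) (n r : Fin k → ℕ)
    (x : (i : Fin k) → Fin (r i) → ℝ)
    (hT : ∀ i, 0 < T i) (hrn : ∀ i, r i ≤ n i)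
    (hτ : ∀ i, 0 < τ i) (hx : ∀ i j, 0 < x i j)
    (θ₁ θ₂ θ₃ β : ℝ) (hθ : 0 < θ₁ ∧ 0 < θ₂ ∧ 0 < θ₃) (hβ : 0 < β)
    (c₁₆ c₁₇ : ℝ) (hcs : 1 ≤ c₁₆) (hcr : 0 < c₁₇) :
    ConcaveOn ℝ (Set.Ioi (0 : ℝ)) (fun t : ℝ =>
      (c₁₆ - 1) * Real.log t - c₁₇ * t
      - t * (∑ i, (r i : ℝ) * V i / T i)
      - ∑ i, ((n i : ℝ) - r i) * T i * Real.exp (-θ₁ - θ₂ / T i - θ₃ * V i - t * V i / T i) * τ i ^ β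
      - ∑ i, ∑ j, T i * Real.exp (-θ₁ - θ₂ / T i - θ₃ * V i - t * V i / T i) * x i j ^ β) :=
  gew2_theta4_logconcave_general k T V τ n r x hT hrn hτ hx θ₁ θ₂ θ₃ β c₁₆ c₁₇ hcs
end

section
/- In the GEW₂ model (gamma priors on all parameters), the full conditional posterior density of the Weibull shape parameter β is log-concave on (0, ∞), provided at least one failure occurred, i.e. Σ_{i=1}^k r_i ≥ 1. Precisely: for any fixed θ₁, θ₂, θ₃, θ₄ > 0, gamma hyperparameters c₁₈ > 0 and c₁₉ > 0, and Σ_{i=1}^k r_i ≥ 1, writing A_i = exp(−θ₁ − θ₂/T_i − θ₃V_i − θ₄V_i/T_i), the function ℓ : (0,∞) → ℝ given by ℓ(b) = (c₁₈ − 1)·ln b − c₁₉·b + (Σ_{i=1}^k r_i)·ln b − Σ_{i=1}^k (n_i − r_i) T_i A_i τ_i^b − Σ_{i=1}^k Σ_{j=1}^{r_i} T_i A_i x_{ij}^b + (b − 1)·Σ_{i=1}^k Σ_{j=1}^{r_i} ln x_{ij} is concave on (0, ∞). -/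
open Real Finset

/-!
Every term of the log posterior in β is concave on `(0, ∞)`: the logarithmic terms combine to
`(c₁₈ - 1 + ∑ rᵢ) log β`, whose coefficient is positive once a failure is observed; the terms
linear in β are affine; and each `τᵢ ^ β = exp (β log τᵢ)` and `xᵢⱼ ^ β` is convex in β and enters
with a nonpositive coefficient.
-/

theorem ConvexOn.sum {𝕜 E β ι : Type*} [Semiring 𝕜] [PartialOrder 𝕜] [AddCommMonoid E]
    [AddCommMonoid β] [PartialOrder β] [IsOrderedAddMonoid β] [SMul 𝕜 E] [Module 𝕜 β]
    {s : Set E} {t : Finset ι} {f : ι → E → β} (hs : Convex 𝕜 s)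
    (hf : ∀ i ∈ t, ConvexOn 𝕜 s (f i)) : ConvexOn 𝕜 s fun x => ∑ i ∈ t, f i x := by
  rw [← Finset.sum_fn]
  exact Finset.sum_induction f (ConvexOn 𝕜 s) (fun _ _ => ConvexOn.add) (convexOn_const 0 hs) hf

theorem Real.convexOn_const_rpow {a : ℝ} (ha : 0 < a) :
    ConvexOn ℝ Set.univ fun b : ℝ => a ^ b := by
  have h := convexOn_exp.comp_linearMap (LinearMap.mul ℝ ℝ (log a))
  rw [Set.preimage_univ] at h
  exact h.congr fun b _ => (rpow_def_of_pos ha b).symm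

theorem Real.convexOn_const_mul_const_rpow {s : Set ℝ} {c a : ℝ} (hs : Convex ℝ s) (hc : 0 ≤ c)
    (ha : 0 < a) : ConvexOn ℝ s fun b : ℝ => c * a ^ b :=
  ((convexOn_const_rpow ha).smul hc).subset (Set.subset_univ _) hs

theorem gew2_beta_logconcave_general
    (k : ℕ) (T V τ : Fin k → ℝ) (n r : Fin k → ℕ)
    (x : (i : Fin k) → Fin (r i) → ℝ)
    (hT : ∀ i, 0 < T i) (hrn : ∀ i, r i ≤ n i)
    (hτ : ∀ i, 0 < τ i) (hx : ∀ i j, 0 < x i j)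
    (θ₁ θ₂ θ₃ θ₄ : ℝ)
    (c₁₈ c₁₉ : ℝ) (hc₁₈ : 0 < c₁₈)
    (hr : 1 ≤ ∑ i, r i) :
    ConcaveOn ℝ (Set.Ioi (0 : ℝ)) (fun b : ℝ =>
      (c₁₈ - 1) * Real.log b - c₁₉ * b
      + (∑ i, (r i : ℝ)) * Real.log b
      - ∑ i, ((n i : ℝ) - r i) * T i * Real.exp (-θ₁ - θ₂ / T i - θ₃ * V i - θ₄ * V i / T i) * τ i ^ b
      - ∑ i, ∑ j, T i * Real.exp (-θ₁ - θ₂ / T i - θ₃ * V i - θ₄ * V i / T i) * x i j ^ b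
      + (b - 1) * ∑ i, ∑ j, Real.log (x i j)) := by
  set A : Fin k → ℝ := fun i => exp (-θ₁ - θ₂ / T i - θ₃ * V i - θ₄ * V i / T i)
  set C : ℝ := ∑ i, ∑ j, log (x i j)
  have hTA : ∀ i, 0 ≤ T i * A i := fun i => mul_nonneg (hT i).le (exp_pos _).le
  have hcoef : 0 ≤ c₁₈ - 1 + ∑ i, (r i : ℝ) := by
    have : (1 : ℝ) ≤ ∑ i, (r i : ℝ) := by exact_mod_cast hr
    linarith
  have hlog : ConcaveOn ℝ (Set.Ioi (0 : ℝ)) fun b => (c₁₈ - 1 + ∑ i, (r i : ℝ)) * log b :=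
    strictConcaveOn_log_Ioi.concaveOn.smul hcoef
  have hlin : ConcaveOn ℝ (Set.Ioi (0 : ℝ)) fun b => (C - c₁₉) * b :=
    (LinearMap.mul ℝ ℝ (C - c₁₉)).concaveOn (convex_Ioi 0)
  have hτ_terms : ConvexOn ℝ (Set.Ioi (0 : ℝ))
      fun b => ∑ i, ((n i : ℝ) - r i) * T i * A i * τ i ^ b :=
    ConvexOn.sum (convex_Ioi 0) fun i _ => by
      have hnr : (0 : ℝ) ≤ n i - r i := sub_nonneg.mpr (by exact_mod_cast hrn i)
      simpa only [mul_assoc] using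
        convexOn_const_mul_const_rpow (convex_Ioi 0) (mul_nonneg hnr (hTA i)) (hτ i)
  have hx_terms : ConvexOn ℝ (Set.Ioi (0 : ℝ)) fun b => ∑ i, ∑ j, T i * A i * x i j ^ b :=
    ConvexOn.sum (convex_Ioi 0) fun i _ =>
      ConvexOn.sum (convex_Ioi 0) fun j _ =>
        convexOn_const_mul_const_rpow (convex_Ioi 0) (hTA i) (hx i j)
  refine (((hlog.add hlin).add_const (-C)).sub (hτ_terms.add hx_terms)).congr fun b _ => ?_
  simp only [Pi.add_apply, Pi.sub_apply]
  ring

theorem gew2_beta_logconcave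
    (k : ℕ) (T V τ : Fin k → ℝ) (n r : Fin k → ℕ)
    (x : (i : Fin k) → Fin (r i) → ℝ)
    (hT : ∀ i, 0 < T i) (hrn : ∀ i, r i ≤ n i)
    (hτ : ∀ i, 0 < τ i) (hx : ∀ i j, 0 < x i j)
    (θ₁ θ₂ θ₃ θ₄ : ℝ) (hθ₁ : 0 < θ₁) (hθ₂ : 0 < θ₂) (hθ₃ : 0 < θ₃) (hθ₄ : 0 < θ₄)
    (c₁₈ c₁₉ : ℝ) (hc₁₈ : 0 < c₁₈) (hc₁₉ : 0 < c₁₉)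
    (hr : 1 ≤ ∑ i, r i) :
    ConcaveOn ℝ (Set.Ioi (0 : ℝ)) (fun b : ℝ =>
      (c₁₈ - 1) * Real.log b - c₁₉ * b
      + (∑ i, (r i : ℝ)) * Real.log b
      - ∑ i, ((n i : ℝ) - r i) * T i * Real.exp (-θ₁ - θ₂ / T i - θ₃ * V i - θ₄ * V i / T i) * τ i ^ b
      - ∑ i, ∑ j, T i * Real.exp (-θ₁ - θ₂ / T i - θ₃ * V i - θ₄ * V i / T i) * x i j ^ b
      + (b - 1) * ∑ i, ∑ j, Real.log (x i j)) :=
  gew2_beta_logconcave_general k T V τ n r x hT hrn hτ hx θ₁ θ₂ θ₃ θ₄ c₁₈ c₁₉ hc₁₈ hr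
end
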